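/- arXiv:2009.12848 — 2 statements merged into one kernel-verified Lean document; each statement's English description precedes it below -/
import Mathlib

section
/- Let λ, μ ∈ (0,∞) and t > 0, and write p01 = p01(t), p11 = p11(t). For every z ∈ [0,1] and every x ∈ (0,1), the function v ↦ v·x − J_{t,v}(z) attains its supremum over ℝ at a unique point v* ∈ ℝ, and v* is the unique real solution of the stationarity equation x = z · p11·e^{v*}/(1 − p11 + e^{v*}·p11) + (1 − z) · p01·e^{v*}/(1 − p01 + e^{v*}·p01). In particular I_{1,t}(z,x) = v*·x − J_{t,v*}(z). -/
noncomputable section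

open MeasureTheory Real Filter

/-- Probability that an initially inactive edge is active at time `t`. -/
def p01 (lam mu t : ℝ) : ℝ := (lam - lam * Real.exp (-(t * (lam + mu)))) / (lam + mu)

/-- Probability that an initially active edge is active at time `t`. -/
def p11 (lam mu t : ℝ) : ℝ := (lam + mu * Real.exp (-(t * (lam + mu)))) / (lam + mu)

/-- The cumulant-type function `J_{t,v}(u)`. -/
def Jfun (lam mu t v u : ℝ) : ℝ :=
  u * Real.log (1 - p11 lam mu t + Real.exp v * p11 lam mu t) +
  (1 - u) * Real.log (1 - p01 lam mu t + Real.exp v * p01 lam mu t)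

/-- The one-step rate function `I_{1,t}(u,x) = sup_v [v x - J_{t,v}(u)]`. -/
def I1 (lam mu t u x : ℝ) : ℝ := ⨆ v : ℝ, (v * x - Jfun lam mu t v u)

/-- The mean of the tilted edge distribution at tilt `v`. -/
def tiltedMean (lam mu t z v : ℝ) : ℝ :=
  z * (p11 lam mu t * Real.exp v / (1 - p11 lam mu t + Real.exp v * p11 lam mu t)) +
  (1 - z) * (p01 lam mu t * Real.exp v / (1 - p01 lam mu t + Real.exp v * p01 lam mu t))

/-! `v ↦ J_{t,v}(z)` is differentiable with derivative the tilted mean `m(v)`, a convex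
combination of the means of two exponentially tilted Bernoulli laws. Each of these increases
strictly from `0` to `1`, hence so does `m`, and by continuity `m(v*) = x` for exactly one `v*`.
The derivative `x - m(v)` of the objective is then positive left of `v*` and negative right of
it, so `v*` is its unique maximiser, and the supremum `I_{1,t}(z,x)` is attained there. -/

theorem apply_lt_apply_of_hasDerivAt_pos_neg {f f' : ℝ → ℝ} {c v : ℝ}
    (hf : ∀ w, HasDerivAt f (f' w) w) (hpos : ∀ w < c, 0 < f' w)
    (hneg : ∀ w, c < w → f' w < 0) (hv : v ≠ c) : f v < f c := by
  have hcont : Continuous f := continuous_iff_continuousAt.2 fun w => (hf w).continuousAt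
  rcases hv.lt_or_gt with hvc | hcv
  · refine strictMonoOn_of_deriv_pos (convex_Iic c) hcont.continuousOn (fun w hw => ?_)
      hvc.le Set.self_mem_Iic hvc
    rw [interior_Iic] at hw
    exact (hf w).deriv ▸ hpos w hw
  · refine strictAntiOn_of_deriv_neg (convex_Ici c) hcont.continuousOn (fun w hw => ?_)
      Set.self_mem_Ici hcv.le hcv
    rw [interior_Ici] at hw
    exact (hf w).deriv ▸ hneg w hw

def bernoulliTilt (p v : ℝ) : ℝ := p * exp v / (1 - p + exp v * p)

section BernoulliTilt

variable {p : ℝ}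

theorem one_sub_add_exp_mul_pos (hp : p ∈ Set.Icc (0 : ℝ) 1) (v : ℝ) :
    0 < 1 - p + exp v * p := by
  rcases hp.2.lt_or_eq with hp1 | rfl
  · have := mul_nonneg (exp_pos v).le hp.1
    linarith
  · simpa using exp_pos v

theorem hasDerivAt_log_one_sub_add_exp_mul (hp : p ∈ Set.Icc (0 : ℝ) 1) (v : ℝ) :
    HasDerivAt (fun v => log (1 - p + exp v * p)) (bernoulliTilt p v) v := by
  have h := (((hasDerivAt_exp v).mul_const p).const_add (1 - p)).log
    (one_sub_add_exp_mul_pos hp v).ne'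
  convert h using 1
  rw [bernoulliTilt, mul_comm p]

theorem continuous_bernoulliTilt (hp : p ∈ Set.Icc (0 : ℝ) 1) : Continuous (bernoulliTilt p) :=
  (continuous_const.mul continuous_exp).div
    (continuous_const.add (continuous_exp.mul continuous_const))
    fun v => (one_sub_add_exp_mul_pos hp v).ne'

theorem strictMono_bernoulliTilt (hp : p ∈ Set.Ioo (0 : ℝ) 1) :
    StrictMono (bernoulliTilt p) := by
  intro v w hvw
  have hexp : exp v < exp w := exp_lt_exp.2 hvw
  have hp' := Set.Ioo_subset_Icc_self hp
  rw [bernoulliTilt, bernoulliTilt,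
    div_lt_div_iff₀ (one_sub_add_exp_mul_pos hp' v) (one_sub_add_exp_mul_pos hp' w)]
  nlinarith [mul_pos (mul_pos hp.1 (sub_pos.2 hp.2)) (sub_pos.2 hexp)]

theorem tendsto_bernoulliTilt_atBot (hp : p ≠ 1) : Tendsto (bernoulliTilt p) atBot (nhds 0) := by
  have hnum : Tendsto (fun v => p * exp v) atBot (nhds (p * 0)) :=
    tendsto_exp_atBot.const_mul p
  have hden : Tendsto (fun v => 1 - p + exp v * p) atBot (nhds (1 - p + 0 * p)) :=
    (tendsto_exp_atBot.mul_const p).const_add (1 - p)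
  have h := hnum.div hden (by simpa [sub_eq_zero] using hp.symm)
  rwa [mul_zero, zero_div] at h

theorem bernoulliTilt_eq_div (p v : ℝ) : bernoulliTilt p v = p / ((1 - p) * exp (-v) + p) := by
  have := (exp_pos v).ne'
  rw [bernoulliTilt, exp_neg]
  field_simp

theorem tendsto_bernoulliTilt_atTop (hp : p ≠ 0) : Tendsto (bernoulliTilt p) atTop (nhds 1) := by
  have hexp : Tendsto (fun v => exp (-v)) atTop (nhds 0) :=
    tendsto_exp_atBot.comp tendsto_neg_atTop_atBot
  have hden : Tendsto (fun v => (1 - p) * exp (-v) + p) atTop (nhds ((1 - p) * 0 + p)) :=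
    (hexp.const_mul (1 - p)).add_const p
  have h := (tendsto_const_nhds (x := p)).div hden (by simpa using hp)
  rw [mul_zero, zero_add, div_self hp] at h
  exact h.congr fun v => (bernoulliTilt_eq_div p v).symm

end BernoulliTilt

section Mixture

variable {a b z : ℝ}

theorem strictMono_mixture_bernoulliTilt (ha : a ∈ Set.Ioo (0 : ℝ) 1)
    (hb : b ∈ Set.Ioo (0 : ℝ) 1) (hz : z ∈ Set.Icc (0 : ℝ) 1) :
    StrictMono fun v => z * bernoulliTilt a v + (1 - z) * bernoulliTilt b v := by
  intro v w hvw
  have hav := strictMono_bernoulliTilt ha hvw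
  have hbv := strictMono_bernoulliTilt hb hvw
  rcases hz.1.eq_or_lt with rfl | hz0
  · simpa using hbv
  · exact add_lt_add_of_lt_of_le (mul_lt_mul_of_pos_left hav hz0)
      (mul_le_mul_of_nonneg_left hbv.le (sub_nonneg.2 hz.2))

theorem exists_mixture_bernoulliTilt_eq (ha : a ∈ Set.Ioo (0 : ℝ) 1)
    (hb : b ∈ Set.Ioo (0 : ℝ) 1) {x : ℝ} (hx : x ∈ Set.Ioo (0 : ℝ) 1) :
    ∃ v, z * bernoulliTilt a v + (1 - z) * bernoulliTilt b v = x := by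
  have hcont : Continuous fun v => z * bernoulliTilt a v + (1 - z) * bernoulliTilt b v :=
    (continuous_const.mul (continuous_bernoulliTilt (Set.Ioo_subset_Icc_self ha))).add
      (continuous_const.mul (continuous_bernoulliTilt (Set.Ioo_subset_Icc_self hb)))
  have hbot : Tendsto (fun v => z * bernoulliTilt a v + (1 - z) * bernoulliTilt b v) atBot
      (nhds (z * 0 + (1 - z) * 0)) :=
    ((tendsto_bernoulliTilt_atBot ha.2.ne).const_mul z).add
      ((tendsto_bernoulliTilt_atBot hb.2.ne).const_mul (1 - z))
  have htop : Tendsto (fun v => z * bernoulliTilt a v + (1 - z) * bernoulliTilt b v) atTop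
      (nhds (z * 1 + (1 - z) * 1)) :=
    ((tendsto_bernoulliTilt_atTop ha.1.ne').const_mul z).add
      ((tendsto_bernoulliTilt_atTop hb.1.ne').const_mul (1 - z))
  rw [mul_zero, mul_zero, add_zero] at hbot
  rw [mul_one, mul_one, add_sub_cancel] at htop
  exact mem_range_of_exists_le_of_exists_ge hcont
    ((hbot.eventually_lt_const hx.1).exists.imp fun _ => le_of_lt)
    ((htop.eventually_const_lt hx.2).exists.imp fun _ => le_of_lt)

end Mixture

section Edge

variable {lam mu t : ℝ}

theorem p11_mem_Ioo (hlam : 0 < lam) (hmu : 0 < mu) (ht : 0 < t) :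
    p11 lam mu t ∈ Set.Ioo (0 : ℝ) 1 := by
  have hE0 := exp_pos (-(t * (lam + mu)))
  have hE1 : exp (-(t * (lam + mu))) < 1 := exp_lt_one_iff.2 (by nlinarith)
  rw [p11, Set.mem_Ioo, div_lt_one (by linarith)]
  exact ⟨by positivity, by nlinarith⟩

theorem p01_mem_Ioo (hlam : 0 < lam) (hmu : 0 < mu) (ht : 0 < t) :
    p01 lam mu t ∈ Set.Ioo (0 : ℝ) 1 := by
  have hE0 := exp_pos (-(t * (lam + mu)))
  have hE1 : exp (-(t * (lam + mu))) < 1 := exp_lt_one_iff.2 (by nlinarith)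
  rw [p01, Set.mem_Ioo, div_lt_one (by linarith)]
  exact ⟨div_pos (by nlinarith) (by linarith), by nlinarith⟩

theorem hasDerivAt_Jfun (h11 : p11 lam mu t ∈ Set.Icc (0 : ℝ) 1)
    (h01 : p01 lam mu t ∈ Set.Icc (0 : ℝ) 1) (z v : ℝ) :
    HasDerivAt (fun v => Jfun lam mu t v z) (tiltedMean lam mu t z v) v :=
  ((hasDerivAt_log_one_sub_add_exp_mul h11 v).const_mul z).add
    ((hasDerivAt_log_one_sub_add_exp_mul h01 v).const_mul (1 - z))

end Edge

/-- Existence, uniqueness and characterisation of the optimal tilt in the Legendre transform. -/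
theorem stmt_6 (lam mu t : ℝ) (hlam : 0 < lam) (hmu : 0 < mu) (ht : 0 < t)
    (z x : ℝ) (hz : z ∈ Set.Icc (0:ℝ) 1) (hx : x ∈ Set.Ioo (0:ℝ) 1) :
    ∃ vstar : ℝ,
      (∀ v : ℝ, v * x - Jfun lam mu t v z ≤ vstar * x - Jfun lam mu t vstar z) ∧
      (∀ v : ℝ, (∀ w : ℝ, w * x - Jfun lam mu t w z ≤ v * x - Jfun lam mu t v z) → v = vstar) ∧
      x = tiltedMean lam mu t z vstar ∧
      (∀ v : ℝ, x = tiltedMean lam mu t z v → v = vstar) ∧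
      I1 lam mu t z x = vstar * x - Jfun lam mu t vstar z := by
  have h11 := p11_mem_Ioo hlam hmu ht
  have h01 := p01_mem_Ioo hlam hmu ht
  have hmono : StrictMono (tiltedMean lam mu t z) := strictMono_mixture_bernoulliTilt h11 h01 hz
  obtain ⟨vstar, hvstar⟩ : ∃ v, tiltedMean lam mu t z v = x :=
    exists_mixture_bernoulliTilt_eq h11 h01 hx
  have hderiv : ∀ w, HasDerivAt (fun v => v * x - Jfun lam mu t v z)
      (x - tiltedMean lam mu t z w) w :=
    fun w => (hasDerivAt_mul_const x).sub
      (hasDerivAt_Jfun (Set.Ioo_subset_Icc_self h11) (Set.Ioo_subset_Icc_self h01) z w)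
  have hlt : ∀ v ≠ vstar, v * x - Jfun lam mu t v z < vstar * x - Jfun lam mu t vstar z :=
    fun v => apply_lt_apply_of_hasDerivAt_pos_neg hderiv
      (fun w hw => sub_pos.2 (hvstar ▸ hmono hw)) (fun w hw => sub_neg.2 (hvstar ▸ hmono hw))
  have hle : ∀ v, v * x - Jfun lam mu t v z ≤ vstar * x - Jfun lam mu t vstar z := fun v =>
    (eq_or_ne v vstar).elim (fun h => h ▸ le_rfl) fun h => (hlt v h).le
  refine ⟨vstar, hle, fun v hv => ?_, hvstar.symm,
    fun v hv => hmono.injective (hv.symm.trans hvstar.symm),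
    ciSup_eq_of_forall_le_of_forall_lt_exists_gt hle fun _ hw => ⟨vstar, hw⟩⟩
  by_contra hne
  exact (hlt v hne).not_ge (hv vstar)
end
end

section
/- Let λ, μ ∈ (0,∞). For every a, b ∈ [0,1], the small-time asymptotics lim_{T→0⁺} I_{1,T}(a,b) / log(1/T) = |a − b| holds. -/
/-!
Write `J_{t,v}(a) = a Λ_{p11}(v) + (1 - a) Λ_{p01}(v)`, where `Λ_p(v) = log (1 - p + e^v p)` is the
cumulant generating function of a Bernoulli(p) variable. As `t → 0`, `p01` and `1 - p11` are of
order `t`, while `p11` and `1 - p01` stay bounded below. For `a ≤ b`, the bounds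
`Λ_p(v) ≥ v + log p` and `Λ_p(v) ≥ log (1 - p)`, used on either side of `v = log (1 / p01)`, give
`v b - J_{t,v}(a) ≤ (b - a) log (1 / t) + O(1)` for every `v`, and `v = log (1 / t)` attains this
up to `O(1)`. The case `b ≤ a` follows from the symmetry `v ↦ -v`, which exchanges the two states.
So `I_{1,t}(a,b) = |a - b| log (1 / t) + O(1)`.
-/

noncomputable section

open MeasureTheory Real Filter

lemma tendsto_div_of_abs_sub_mul_le {α : Type*} {l : Filter α} {f g : α → ℝ} {c K : ℝ}
    (hg : Tendsto g l atTop) (hfg : ∀ᶠ x in l, |f x - c * g x| ≤ K) :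
    Tendsto (fun x ↦ f x / g x) l (nhds c) := by
  have hbdd : IsBoundedUnder (· ≤ ·) l (norm ∘ fun x ↦ f x - c * g x) :=
    isBoundedUnder_of_eventually_le (a := K) hfg
  have h0 := (hg.inv_tendsto_atTop.zero_mul_isBoundedUnder_le hbdd).const_add c
  rw [add_zero] at h0
  refine h0.congr' ?_
  filter_upwards [hg.eventually_gt_atTop 0] with x hx
  simp only [Pi.inv_apply]
  field_simp
  ring

lemma div_one_add_le_one_sub_exp_neg {x : ℝ} (hx : 0 ≤ x) : x / (1 + x) ≤ 1 - exp (-x) := by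
  have hinv : exp (-x) * exp x = 1 := by rw [← exp_add, neg_add_cancel, exp_zero]
  rw [div_le_iff₀ (by linarith)]
  nlinarith [add_one_le_exp x, exp_pos (-x)]

lemma div_mul_one_sub_exp_neg_mem_Icc {r s t : ℝ} (hr : 0 ≤ r) (hs : 0 < s) (ht : 0 ≤ t)
    (ht1 : t ≤ 1) : r / s * (1 - exp (-(t * s))) ∈ Set.Icc (r / (1 + s) * t) (r * t) := by
  have hts : 0 ≤ t * s := by positivity
  constructor
  · calc r / (1 + s) * t = r / s * (t * s / (1 + s)) := by field_simp
      _ ≤ r / s * (t * s / (1 + t * s)) := by gcongr; nlinarith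
      _ ≤ r / s * (1 - exp (-(t * s))) := by gcongr; exact div_one_add_le_one_sub_exp_neg hts
  · calc r / s * (1 - exp (-(t * s))) ≤ r / s * (t * s) := by
          gcongr; linarith [add_one_le_exp (-(t * s))]
      _ = r * t := by field_simp

def bernoulliCGF (p v : ℝ) : ℝ := log (1 - p + exp v * p)

section BernoulliCGF

variable {p v : ℝ}

lemma add_log_le_bernoulliCGF (hp : 0 < p) (hp1 : p ≤ 1) : v + log p ≤ bernoulliCGF p v := by
  rw [← log_exp v, ← log_mul (exp_ne_zero v) hp.ne', log_exp]
  exact log_le_log (by positivity) (by linarith)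

lemma log_one_sub_le_bernoulliCGF (hp : 0 ≤ p) (hp1 : p < 1) :
    log (1 - p) ≤ bernoulliCGF p v :=
  log_le_log (by linarith) (by nlinarith [exp_pos v])

lemma bernoulliCGF_neg (hp : p ∈ Set.Icc 0 1) :
    bernoulliCGF p (-v) = -v + bernoulliCGF (1 - p) v := by
  have h : 1 - p + exp (-v) * p = exp (-v) * (1 - (1 - p) + exp v * (1 - p)) := by
    rw [exp_neg]; field_simp; ring
  have hpos : 0 < 1 - (1 - p) + exp v * (1 - p) := by
    rcases hp.2.lt_or_eq with hp1 | rfl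
    · nlinarith [mul_pos (exp_pos v) (sub_pos.2 hp1), hp.1]
    · norm_num
  rw [bernoulliCGF, h, log_mul (exp_ne_zero _) hpos.ne', log_exp, bernoulliCGF]

lemma bernoulliCGF_log_le {s : ℝ} (hp : p ∈ Set.Icc 0 1) (hs : 1 ≤ s) :
    bernoulliCGF p (log s) ≤ log s := by
  rw [bernoulliCGF, exp_log (by linarith)]
  exact log_le_log (by nlinarith [hp.1, hp.2]) (by nlinarith [hp.1, hp.2])

lemma bernoulliCGF_log_le_log_one_add {s : ℝ} (hp : p ∈ Set.Icc 0 1) (hs : 1 ≤ s) :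
    bernoulliCGF p (log s) ≤ log (1 + s * p) := by
  rw [bernoulliCGF, exp_log (by linarith)]
  exact log_le_log (by nlinarith [hp.1, hp.2]) (by linarith [hp.1])

end BernoulliCGF

def rateObjective (p q a b v : ℝ) : ℝ :=
  v * b - (a * bernoulliCGF p v + (1 - a) * bernoulliCGF q v)

lemma I1_eq_iSup_rateObjective (lam mu t a b : ℝ) :
    I1 lam mu t a b = ⨆ v, rateObjective (p11 lam mu t) (p01 lam mu t) a b v :=
  rfl

section RateObjective

variable {p q a b : ℝ}

lemma rateObjective_neg (hp : p ∈ Set.Icc 0 1) (hq : q ∈ Set.Icc 0 1) (v : ℝ) :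
    rateObjective p q a b (-v) = rateObjective (1 - q) (1 - p) (1 - a) (1 - b) v := by
  simp only [rateObjective, bernoulliCGF_neg hp, bernoulliCGF_neg hq]
  ring

lemma iSup_rateObjective_reflect (hp : p ∈ Set.Icc 0 1) (hq : q ∈ Set.Icc 0 1) :
    ⨆ v, rateObjective p q a b v = ⨆ v, rateObjective (1 - q) (1 - p) (1 - a) (1 - b) v := by
  rw [← (Equiv.neg ℝ).iSup_comp]
  exact iSup_congr fun v ↦ rateObjective_neg hp hq v

lemma rateObjective_le_of_le (hp : p ∈ Set.Ioc 0 1) (hq : q ∈ Set.Ioo 0 1)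
    (ha : 0 ≤ a) (hab : a ≤ b) (hb : b ≤ 1) (v : ℝ) :
    rateObjective p q a b v ≤ (b - a) * -log q - log p - log (1 - q) := by
  have hP := add_log_le_bernoulliCGF (v := v) hp.1 hp.2
  have hlogp : log p ≤ 0 := log_nonpos hp.1.le hp.2
  have hlogq : log (1 - q) ≤ 0 := log_nonpos (by linarith [hq.2]) (by linarith [hq.1])
  have hPa := mul_le_mul_of_nonneg_left hP ha
  unfold rateObjective
  rcases le_total v (-log q) with hv | hv
  · have hQ := mul_le_mul_of_nonneg_left (log_one_sub_le_bernoulliCGF (v := v) hq.1.le hq.2)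
      (by linarith : 0 ≤ 1 - a)
    nlinarith
  · have hQ := mul_le_mul_of_nonneg_left (add_log_le_bernoulliCGF (v := v) hq.1 hq.2.le)
      (by linarith : 0 ≤ 1 - a)
    nlinarith

lemma le_rateObjective_log_of_le (hp : p ∈ Set.Icc 0 1) (hq : q ∈ Set.Icc 0 1)
    (ha : 0 ≤ a) (ha1 : a ≤ 1) {s : ℝ} (hs : 1 ≤ s) :
    b * log s - a * log s - log (1 + s * q) ≤ rateObjective p q a b (log s) := by
  have hP := mul_le_mul_of_nonneg_left (bernoulliCGF_log_le hp hs) ha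
  have hQ := mul_le_mul_of_nonneg_left (bernoulliCGF_log_le_log_one_add hq hs)
    (by linarith : 0 ≤ 1 - a)
  have hlog : 0 ≤ log (1 + s * q) := log_nonneg (by nlinarith [hq.1])
  unfold rateObjective
  nlinarith

end RateObjective

lemma abs_iSup_rateObjective_sub_le_of_le {p q a b t c C : ℝ} (ht : 0 < t) (ht1 : t ≤ 1)
    (hc : 0 < c) (hq : c * t ≤ q) (hqC : q ≤ C * t) (hpc : c ≤ p) (hp1 : p ≤ 1)
    (hqc : c ≤ 1 - q) (ha : 0 ≤ a) (hab : a ≤ b) (hb : b ≤ 1) :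
    |(⨆ v, rateObjective p q a b v) - (b - a) * log (1 / t)| ≤ log (1 + C) - 3 * log c := by
  have hq0 : 0 < q := (mul_pos hc ht).trans_le hq
  have hq1 : q < 1 := by linarith
  have hlogc : log c ≤ 0 := log_nonpos hc.le (hpc.trans hp1)
  have hlogC : 0 ≤ log (1 + C) := log_nonneg (by nlinarith)
  have hs : 1 ≤ 1 / t := (one_le_div ht).2 ht1
  have hlogq : log c - log (1 / t) ≤ log q := by
    rw [one_div, log_inv, sub_neg_eq_add, ← log_mul hc.ne' ht.ne']
    exact log_le_log (by positivity) hq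
  have hlogp : log c ≤ log p := log_le_log hc hpc
  have hlog1q : log c ≤ log (1 - q) := log_le_log hc hqc
  have hupper (v : ℝ) : rateObjective p q a b v ≤ (b - a) * log (1 / t) - 3 * log c := by
    have := rateObjective_le_of_le ⟨hc.trans_le hpc, hp1⟩ ⟨hq0, hq1⟩ ha hab hb v
    nlinarith
  have hlower : (b - a) * log (1 / t) - log (1 + C) ≤ ⨆ v, rateObjective p q a b v := by
    refine le_trans ?_ (le_ciSup ⟨_, Set.forall_mem_range.2 hupper⟩ (log (1 / t)))
    have hsq : 1 + 1 / t * q ≤ 1 + C := by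
      rw [one_div_mul_eq_div, add_le_add_iff_left, div_le_iff₀ ht]; exact hqC
    have := le_rateObjective_log_of_le ⟨hc.le.trans hpc, hp1⟩ ⟨hq0.le, hq1.le⟩ ha (hab.trans hb)
      (b := b) hs
    have := log_le_log (by positivity) hsq
    nlinarith
  rw [abs_le]
  constructor
  · linarith
  · linarith [ciSup_le hupper]

lemma abs_iSup_rateObjective_sub_le {p q a b t c C : ℝ} (ht : 0 < t) (ht1 : t ≤ 1) (hc : 0 < c)
    (hq : c * t ≤ q) (hqC : q ≤ C * t) (hp : c * t ≤ 1 - p) (hpC : 1 - p ≤ C * t)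
    (hpc : c ≤ p) (hqc : c ≤ 1 - q) (ha : a ∈ Set.Icc 0 1) (hb : b ∈ Set.Icc 0 1) :
    |(⨆ v, rateObjective p q a b v) - |a - b| * log (1 / t)| ≤ log (1 + C) - 3 * log c := by
  have hct : 0 < c * t := mul_pos hc ht
  rcases le_total a b with hab | hab
  · rw [abs_of_nonpos (sub_nonpos.2 hab), neg_sub]
    exact abs_iSup_rateObjective_sub_le_of_le ht ht1 hc hq hqC hpc (by linarith) hqc ha.1 hab hb.2
  · rw [abs_of_nonneg (sub_nonneg.2 hab),
      iSup_rateObjective_reflect ⟨by linarith, by linarith⟩ ⟨by linarith, by linarith⟩]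
    convert abs_iSup_rateObjective_sub_le_of_le ht ht1 hc hp hpC hqc (by linarith)
      (by rwa [sub_sub_cancel]) (by linarith [ha.2]) (by linarith : 1 - a ≤ 1 - b)
      (by linarith [hb.1]) using 3
    ring

section SwitchProbabilities

variable {lam mu : ℝ} (t : ℝ)

lemma p01_eq : p01 lam mu t = lam / (lam + mu) * (1 - exp (-(t * (lam + mu)))) := by
  unfold p01; ring

lemma p11_eq : p11 lam mu t = lam / (lam + mu) + mu / (lam + mu) * exp (-(t * (lam + mu))) := by
  unfold p11; ring

lemma one_sub_p01_eq (hs : lam + mu ≠ 0) :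
    1 - p01 lam mu t = mu / (lam + mu) + lam / (lam + mu) * exp (-(t * (lam + mu))) := by
  unfold p01; field_simp; ring

lemma one_sub_p11_eq (hs : lam + mu ≠ 0) :
    1 - p11 lam mu t = mu / (lam + mu) * (1 - exp (-(t * (lam + mu)))) := by
  unfold p11; field_simp; ring

end SwitchProbabilities

lemma abs_I1_sub_le {lam mu a b : ℝ} (hlam : 0 < lam) (hmu : 0 < mu) (ha : a ∈ Set.Icc 0 1)
    (hb : b ∈ Set.Icc 0 1) :
    ∃ K, ∀ t ∈ Set.Ioc (0 : ℝ) 1, |I1 lam mu t a b - |a - b| * log (1 / t)| ≤ K := by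
  have hs : 0 < lam + mu := by positivity
  set c := min lam mu / (1 + (lam + mu))
  have hc : 0 < c := by positivity
  have hclam : c ≤ lam / (1 + (lam + mu)) :=
    div_le_div_of_nonneg_right (min_le_left _ _) (by positivity)
  have hcmu : c ≤ mu / (1 + (lam + mu)) :=
    div_le_div_of_nonneg_right (min_le_right _ _) (by positivity)
  refine ⟨log (1 + (lam + mu)) - 3 * log c, fun t ht ↦ ?_⟩
  obtain ⟨hq, hqC⟩ := div_mul_one_sub_exp_neg_mem_Icc hlam.le hs ht.1.le ht.2
  obtain ⟨hp, hpC⟩ := div_mul_one_sub_exp_neg_mem_Icc hmu.le hs ht.1.le ht.2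
  rw [← p01_eq] at hq hqC
  rw [← one_sub_p11_eq t hs.ne'] at hp hpC
  have hE := exp_pos (-(t * (lam + mu)))
  have hslam : lam / (1 + (lam + mu)) ≤ lam / (lam + mu) :=
    div_le_div_of_nonneg_left hlam.le hs (by linarith)
  have hsmu : mu / (1 + (lam + mu)) ≤ mu / (lam + mu) :=
    div_le_div_of_nonneg_left hmu.le hs (by linarith)
  rw [I1_eq_iSup_rateObjective]
  refine abs_iSup_rateObjective_sub_le ht.1 ht.2 hc ?_ ?_ ?_ ?_ ?_ ?_ ha hb
  · exact le_trans (by gcongr; exact ht.1.le) hq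
  · exact hqC.trans (by nlinarith [ht.1])
  · exact le_trans (by gcongr; exact ht.1.le) hp
  · exact hpC.trans (by nlinarith [ht.1])
  · rw [p11_eq]; nlinarith [div_pos hmu hs]
  · rw [one_sub_p01_eq t hs.ne']; nlinarith [div_pos hlam hs]

/-- Small-time asymptotics of the one-step rate function:
`I_{1,T}(a,b) / log(1/T) → |a − b|` as `T ↓ 0`. -/
theorem stmt_12 (lam mu : ℝ) (hlam : 0 < lam) (hmu : 0 < mu)
    (a b : ℝ) (ha : a ∈ Set.Icc (0:ℝ) 1) (hb : b ∈ Set.Icc (0:ℝ) 1) :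
    Filter.Tendsto (fun T : ℝ => I1 lam mu T a b / Real.log (1 / T))
      (nhdsWithin 0 (Set.Ioi 0)) (nhds |a - b|) := by
  obtain ⟨K, hK⟩ := abs_I1_sub_le hlam hmu ha hb
  refine tendsto_div_of_abs_sub_mul_le (K := K) ?_ ?_
  · simpa only [one_div, Function.comp_def] using tendsto_log_atTop.comp tendsto_inv_nhdsGT_zero
  · filter_upwards [Ioc_mem_nhdsGT one_pos] with t ht using hK t ht
end
end
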